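/- arXiv:2502.07410 — 7 statements merged into one kernel-verified Lean document; each statement's English description precedes it below -/
import Mathlib

section
/- Let 0 < α < 1, 0 ≤ ε < 1, λ > 0 and R > 0 be real numbers, and let β be any real number. Define q₀₀ = (1−α)/(1+α(1−α)²), q₁₀ = α·q₀₀, q₂₀ = (α²/(1−α))·q₀₀, q₁₁ = α(1−α)·q₀₀, Diff = (1−α)·q₀₀ + α·q₂₀ + 2(1−α)·q₂₀ + 2·q₁₁, and Profit = (α·q₂₀ + 2(1−α)·q₂₀ + 2α·q₁₁ + (1−ε)(1−α−β)·q₁₁)·(λ·R/Diff). Then Profit > α·λ·R if and only if β < (α − ε(1−α)²)/((1−α)(1−ε)). -/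
/-!
The normalisation `q₀₀` of the stationary distribution cancels in `Profit`, so only its sign
matters. After clearing the positive factor `λ R / Diff`, profitability reads
`Reward > α · Diff`, where `Reward` is the first factor of `Profit`, and with `q₂₀ = α²/(1-α) q₀₀`, `q₁₁ = α(1-α) q₀₀` the gap `Reward - α · Diff`
factors as `α q₀₀ ((α - ε(1-α)²) - β (1-α)(1-ε))`.
-/

lemma lt_mul_div_iff_mul_lt {a N K D : ℝ} (hK : 0 < K) (hD : 0 < D) :
    a * K < N * (K / D) ↔ a * D < N := by
  rw [mul_div_left_comm, ← mul_div_assoc, lt_div_iff₀ hD, mul_right_comm, mul_comm K N,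
    mul_lt_mul_iff_left₀ hK]

section SelfishMining

variable {α ε β q q20 q11 : ℝ}

lemma selfish_reward_sub_diff (hα1 : α ≠ 1) (hq20 : q20 = α ^ 2 / (1 - α) * q)
    (hq11 : q11 = α * (1 - α) * q) :
    (α * q20 + 2 * (1 - α) * q20 + 2 * α * q11 + (1 - ε) * (1 - α - β) * q11) -
        α * ((1 - α) * q + α * q20 + 2 * (1 - α) * q20 + 2 * q11) =
      α * q * ((α - ε * (1 - α) ^ 2) - β * ((1 - α) * (1 - ε))) := by
  have : 1 - α ≠ 0 := sub_ne_zero.mpr hα1.symm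
  subst hq20 hq11
  field_simp
  ring

lemma selfish_diff_pos (hα0 : 0 < α) (hα1 : α < 1) (hq : 0 < q)
    (hq20 : q20 = α ^ 2 / (1 - α) * q) (hq11 : q11 = α * (1 - α) * q) :
    0 < (1 - α) * q + α * q20 + 2 * (1 - α) * q20 + 2 * q11 := by
  have h1α : 0 < 1 - α := sub_pos.mpr hα1
  have : 0 < q20 := hq20 ▸ by positivity
  have : 0 < q11 := hq11 ▸ by positivity
  positivity

end SelfishMining

theorem stmt_0_general (α ε lam R β : ℝ)
    (hα0 : 0 < α) (hα1 : α < 1) (hε1 : ε < 1)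
    (hlam : 0 < lam) (hR : 0 < R)
    (q00 q20 q11 Diff Profit : ℝ)
    (hq00 : q00 = (1 - α) / (1 + α * (1 - α) ^ 2))
    (hq20 : q20 = (α ^ 2 / (1 - α)) * q00)
    (hq11 : q11 = α * (1 - α) * q00)
    (hDiff : Diff = (1 - α) * q00 + α * q20 + 2 * (1 - α) * q20 + 2 * q11)
    (hProfit : Profit =
      (α * q20 + 2 * (1 - α) * q20 + 2 * α * q11 + (1 - ε) * (1 - α - β) * q11) *
        (lam * R / Diff)) :
    Profit > α * lam * R ↔ β < (α - ε * (1 - α) ^ 2) / ((1 - α) * (1 - ε)) := by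
  have h1α : 0 < 1 - α := sub_pos.mpr hα1
  have h1ε : 0 < 1 - ε := sub_pos.mpr hε1
  have hq00_pos : 0 < q00 := hq00 ▸ by positivity
  have hDiff_pos : 0 < Diff := hDiff ▸ selfish_diff_pos hα0 hα1 hq00_pos hq20 hq11
  rw [hProfit, gt_iff_lt, mul_assoc, lt_mul_div_iff_mul_lt (mul_pos hlam hR) hDiff_pos,
    ← sub_pos, hDiff, selfish_reward_sub_diff hα1.ne hq20 hq11,
    mul_pos_iff_of_pos_left (mul_pos hα0 hq00_pos), sub_pos, lt_div_iff₀ (by positivity)]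

/-- Algebraic core of Theorem 1 (profitability of the selfish mining strategy
`π^selfish` in an (ε, D=1)-semi-rational environment). -/
theorem stmt_0 (α ε lam R β : ℝ)
    (hα0 : 0 < α) (hα1 : α < 1) (hε0 : 0 ≤ ε) (hε1 : ε < 1)
    (hlam : 0 < lam) (hR : 0 < R)
    (q00 q10 q20 q11 Diff Profit : ℝ)
    (hq00 : q00 = (1 - α) / (1 + α * (1 - α) ^ 2))
    (hq10 : q10 = α * q00)
    (hq20 : q20 = (α ^ 2 / (1 - α)) * q00)
    (hq11 : q11 = α * (1 - α) * q00)
    (hDiff : Diff = (1 - α) * q00 + α * q20 + 2 * (1 - α) * q20 + 2 * q11)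
    (hProfit : Profit =
      (α * q20 + 2 * (1 - α) * q20 + 2 * α * q11 + (1 - ε) * (1 - α - β) * q11) *
        (lam * R / Diff)) :
    Profit > α * lam * R ↔ β < (α - ε * (1 - α) ^ 2) / ((1 - α) * (1 - ε)) :=
  stmt_0_general α ε lam R β hα0 hα1 hε1 hlam hR q00 q20 q11 Diff Profit hq00 hq20 hq11 hDiff
    hProfit
end

section
/- Let 0 < α₁ < 1, 0 ≤ ε < 1, and let α : I → ℝ be a finite family of nonnegative real numbers with Σᵢ αᵢ = 1 − α₁ and αᵢ ≤ α₂ for every i ∈ I, where α₂ ≥ 0. If α₁/(1−α₁) > α₂ + ε(1 − α₁ − α₂), then β₁ := (Σᵢ αᵢ²)/(1−α₁) < (α₁ − ε(1−α₁)²)/((1−α₁)(1−ε)). -/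
/-!
Bounding each share by `α₂` gives `∑ αᵢ² ≤ α₂ ∑ αᵢ = α₂ (1 − α₁)`, so `β₁ ≤ α₂`. After clearing the
positive denominators `1 − α₁` and `1 − ε`, the hypothesis on `α₁ / (1 − α₁)` is literally the
inequality `α₂ < (α₁ − ε (1 − α₁)²) / ((1 − α₁)(1 − ε))`.
-/

theorem Finset.sum_sq_le_mul_sum {ι R : Type*} [Semiring R] [PartialOrder R] [IsOrderedRing R]
    (s : Finset ι) (f : ι → R) (M : R) (hf : ∀ i ∈ s, 0 ≤ f i) (hM : ∀ i ∈ s, f i ≤ M) :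
    ∑ i ∈ s, f i ^ 2 ≤ M * ∑ i ∈ s, f i := by
  rw [Finset.mul_sum]
  refine Finset.sum_le_sum fun i hi => ?_
  rw [sq]
  exact mul_le_mul_of_nonneg_right (hM i hi) (hf i hi)

theorem sum_sq_div_le_of_sum_eq {ι : Type*} [Fintype ι] (f : ι → ℝ) (M S : ℝ) (hS : 0 < S)
    (hf : ∀ i, 0 ≤ f i) (hM : ∀ i, f i ≤ M) (hsum : ∑ i, f i = S) :
    (∑ i, f i ^ 2) / S ≤ M := by
  rw [div_le_iff₀ hS, ← hsum]
  exact Finset.sum_sq_le_mul_sum _ f M (fun i _ => hf i) (fun i _ => hM i)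

theorem lt_selfish_threshold_iff {α₁ α₂ ε : ℝ} (hα₁ : α₁ < 1) (hε : ε < 1) :
    α₂ < (α₁ - ε * (1 - α₁) ^ 2) / ((1 - α₁) * (1 - ε)) ↔
      α₂ + ε * (1 - α₁ - α₂) < α₁ / (1 - α₁) := by
  have h₁ : 0 < 1 - α₁ := sub_pos.mpr hα₁
  have hε' : 0 < 1 - ε := sub_pos.mpr hε
  rw [lt_div_iff₀ (mul_pos h₁ hε'), lt_div_iff₀ h₁]
  constructor <;> intro h <;> linarith

theorem stmt_3_general {I : Type*} [Fintype I] (α₁ α₂ ε : ℝ) (α : I → ℝ)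
    (hα₁1 : α₁ < 1) (hε1 : ε < 1)
    (hnn : ∀ i, 0 ≤ α i) (hsum : ∑ i, α i = 1 - α₁)
    (hub : ∀ i, α i ≤ α₂)
    (hcond : α₁ / (1 - α₁) > α₂ + ε * (1 - α₁ - α₂)) :
    (∑ i, (α i) ^ 2) / (1 - α₁) < (α₁ - ε * (1 - α₁) ^ 2) / ((1 - α₁) * (1 - ε)) :=
  calc (∑ i, (α i) ^ 2) / (1 - α₁)
      ≤ α₂ := sum_sq_div_le_of_sum_eq α α₂ _ (sub_pos.mpr hα₁1) hnn hub hsum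
    _ < _ := (lt_selfish_threshold_iff hα₁1 hε1).mpr hcond

/-- Corollary 1, first part: if `α₁/(1−α₁) > α₂ + ε(1−α₁−α₂)`, then the residual
centralization factor of the largest pool is below the selfish-mining advantage. -/
theorem stmt_3 {I : Type*} [Fintype I] (α₁ α₂ ε : ℝ) (α : I → ℝ)
    (hα₁0 : 0 < α₁) (hα₁1 : α₁ < 1) (hε0 : 0 ≤ ε) (hε1 : ε < 1)
    (hnn : ∀ i, 0 ≤ α i) (hsum : ∑ i, α i = 1 - α₁)
    (hub : ∀ i, α i ≤ α₂) (hα₂ : 0 ≤ α₂)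
    (hcond : α₁ / (1 - α₁) > α₂ + ε * (1 - α₁ - α₂)) :
    (∑ i, (α i) ^ 2) / (1 - α₁) < (α₁ - ε * (1 - α₁) ^ 2) / ((1 - α₁) * (1 - ε)) :=
  stmt_3_general α₁ α₂ ε α hα₁1 hε1 hnn hsum hub hcond
end

section
/- Let λ > 0, R > 0, L > 0, k > 0 be real numbers, let 0 ≤ α_i < 1, ε ≥ 0, and let 0 < α_A ≤ 1 satisfy α_A > α_i/(1−α_i) + ε·(1/(1−α_i) + 1). Set br = (α_i+ε)/(1−α_i) + ε. Then λ·(α_A·(L+k)·R − k·br·R)/L > λ·α_A·R. -/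
/-!
The attack's surplus over honest mining is `λ k R (α_A - br) / L`, and the hypothesis on `α_A`
says exactly that `br < α_A`.
-/

lemma bribe_eq (αi ε : ℝ) (hi : αi ≠ 1) :
    αi / (1 - αi) + ε * (1 / (1 - αi) + 1) = (αi + ε) / (1 - αi) + ε := by
  have : 1 - αi ≠ 0 := sub_ne_zero.mpr hi.symm
  field_simp
  ring

lemma attack_profit_sub_honest_profit (lam R L k a b : ℝ) (hL : L ≠ 0) :
    lam * (a * (L + k) * R - k * b * R) / L - lam * a * R = lam * k * R * (a - b) / L := by
  field_simp
  ring

theorem stmt_8_general (lam R L k αi ε αA : ℝ)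
    (hlam : 0 < lam) (hR : 0 < R) (hL : 0 < L) (hk : 0 < k)
    (hi1 : αi < 1)
    (hcond : αA > αi / (1 - αi) + ε * (1 / (1 - αi) + 1)) :
    lam * (αA * (L + k) * R - k * ((αi + ε) / (1 - αi) + ε) * R) / L >
      lam * αA * R := by
  rw [bribe_eq αi ε hi1.ne] at hcond
  rw [gt_iff_lt, ← sub_pos, attack_profit_sub_honest_profit lam R L k _ _ hL.ne']
  exact div_pos (mul_pos (mul_pos (mul_pos hlam hk) hR) (sub_pos.mpr hcond)) hL

/-- Theorem 5: profitability of the whale-transaction-based bribery attack. -/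
theorem stmt_8 (lam R L k αi ε αA : ℝ)
    (hlam : 0 < lam) (hR : 0 < R) (hL : 0 < L) (hk : 0 < k)
    (hi0 : 0 ≤ αi) (hi1 : αi < 1) (hε : 0 ≤ ε)
    (hA0 : 0 < αA) (hA1 : αA ≤ 1)
    (hcond : αA > αi / (1 - αi) + ε * (1 / (1 - αi) + 1)) :
    lam * (αA * (L + k) * R - k * ((αi + ε) / (1 - αi) + ε) * R) / L >
      lam * αA * R :=
  stmt_8_general lam R L k αi ε αA hlam hR hL hk hi1 hcond
end

section
/- Let λ > 0, R > 0, L > 0, k > 0 be real numbers, let α_i ≥ 0, ε ≥ 0, and let α_A satisfy α_A > α_i + 2ε. Then λ·(α_A·(L+k)·R − k·(α_i+2ε)·R)/L > λ·α_A·R. -/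
/-- Per epoch the attacker mines a share `αA` of the `L + k` blocks produced and pays the bribe
`br * R` for each of the `k` orphaned target blocks; after difficulty adjustment an epoch takes
time `L / lam`. -/
noncomputable def attackProfit (lam R L k αA br : ℝ) : ℝ :=
  lam * (αA * (L + k) * R - k * br * R) / L

noncomputable def honestProfit (lam R αA : ℝ) : ℝ :=
  lam * αA * R

theorem attackProfit_sub_honestProfit (lam R L k αA br : ℝ) (hL : L ≠ 0) :
    attackProfit lam R L k αA br - honestProfit lam R αA = lam * k * R * (αA - br) / L := by
  unfold attackProfit honestProfit
  field_simp
  ring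

theorem honestProfit_lt_attackProfit (lam R L k αA br : ℝ) (hlam : 0 < lam) (hR : 0 < R)
    (hL : 0 < L) (hk : 0 < k) (hbr : br < αA) :
    honestProfit lam R αA < attackProfit lam R L k αA br := by
  rw [← sub_pos, attackProfit_sub_honestProfit _ _ _ _ _ _ hL.ne']
  have := sub_pos.mpr hbr
  positivity

theorem stmt_10_general (lam R L k αi ε αA : ℝ)
    (hlam : 0 < lam) (hR : 0 < R) (hL : 0 < L) (hk : 0 < k)
    (hcond : αA > αi + 2 * ε) :
    lam * (αA * (L + k) * R - k * (αi + 2 * ε) * R) / L > lam * αA * R :=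
  honestProfit_lt_attackProfit lam R L k αA (αi + 2 * ε) hlam hR hL hk hcond

/-- Theorem 3: profitability of the smart-contract-based bribery attack in an
ε-semi-rational environment. -/
theorem stmt_10 (lam R L k αi ε αA : ℝ)
    (hlam : 0 < lam) (hR : 0 < R) (hL : 0 < L) (hk : 0 < k)
    (hi : 0 ≤ αi) (hε : 0 ≤ ε) (hcond : αA > αi + 2 * ε) :
    lam * (αA * (L + k) * R - k * (αi + 2 * ε) * R) / L > lam * αA * R :=
  stmt_10_general lam R L k αi ε αA hlam hR hL hk hcond
end

section
/- Let α : I → ℝ be a finite family of nonnegative real numbers with Σᵢ αᵢ = 1, let j ∈ I with 0 < α_j < 1, and set β_j := (Σ_{i ≠ j} αᵢ²)/(1−α_j). Then: (i) p_success := (Σ_{i ≠ j} αᵢ·(1−αᵢ))/(1−α_j) = 1 − β_j; and (ii) for all real R > 0, ε ≥ 0, br₁ ≥ 0, the inequality α_j·p_success·(1+br₁)·R + α_j·(1−p_success)·br₁·R ≥ α_j·R + ε·α_j·R holds if and only if br₁ ≥ β_j + ε. -/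
/-!
Since the shares sum to one, the other pools hold `1 - α_j` in total, so
`∑_{i ≠ j} αᵢ (1 - αᵢ) = (1 - α_j) - ∑_{i ≠ j} αᵢ²`, which gives `p_success = 1 - β_j`.
The bribe is paid in either outcome, so the expected return of a rival block is
`α_j R (p_success + br₁)`; dividing the incentive condition by `α_j R > 0` leaves
`p_success + br₁ ≥ 1 + ε`, i.e. `br₁ ≥ β_j + ε`.
-/

open Finset

theorem sum_erase_mul_one_sub_eq {ι : Type*} [DecidableEq ι] {s : Finset ι} {f : ι → ℝ}
    (hsum : ∑ i ∈ s, f i = 1) {j : ι} (hj : j ∈ s) :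
    ∑ i ∈ s.erase j, f i * (1 - f i) = (1 - f j) - ∑ i ∈ s.erase j, f i ^ 2 := by
  have hrest : ∑ i ∈ s.erase j, f i = 1 - f j := by
    rw [← hsum, ← add_sum_erase s f hj, add_sub_cancel_left]
  rw [← hrest, ← sum_sub_distrib]
  exact sum_congr rfl fun i _ => by ring

theorem bribe_expected_return_eq (a p b R : ℝ) :
    a * p * (1 + b) * R + a * (1 - p) * b * R = a * R * (p + b) := by
  ring

theorem bribe_incentive_iff {a p b R ε : ℝ} (ha : 0 < a) (hR : 0 < R) :
    a * p * (1 + b) * R + a * (1 - p) * b * R ≥ a * R + ε * a * R ↔ b ≥ (1 - p) + ε := by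
  have hrhs : a * R + ε * a * R = a * R * (1 + ε) := by ring
  rw [bribe_expected_return_eq, hrhs, ge_iff_le, mul_le_mul_iff_right₀ (mul_pos ha hR)]
  constructor <;> intro h <;> linarith

theorem stmt_11_general {I : Type*} [Fintype I] [DecidableEq I] (α : I → ℝ)
    (hsum : ∑ i, α i = 1)
    (j : I) (hj0 : 0 < α j) (hj1 : α j < 1) :
    (∑ i ∈ Finset.univ.erase j, α i * (1 - α i)) / (1 - α j) =
      1 - (∑ i ∈ Finset.univ.erase j, (α i) ^ 2) / (1 - α j) ∧
    ∀ R ε br₁ : ℝ, 0 < R → 0 ≤ ε → 0 ≤ br₁ →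
      (α j * ((∑ i ∈ Finset.univ.erase j, α i * (1 - α i)) / (1 - α j)) *
          (1 + br₁) * R +
        α j * (1 - (∑ i ∈ Finset.univ.erase j, α i * (1 - α i)) / (1 - α j)) *
          br₁ * R ≥ α j * R + ε * α j * R ↔
        br₁ ≥ (∑ i ∈ Finset.univ.erase j, (α i) ^ 2) / (1 - α j) + ε) := by
  have hne : 1 - α j ≠ 0 := sub_ne_zero.mpr hj1.ne'
  have hsuccess : (∑ i ∈ univ.erase j, α i * (1 - α i)) / (1 - α j) =
      1 - (∑ i ∈ univ.erase j, α i ^ 2) / (1 - α j) := by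
    rw [sum_erase_mul_one_sub_eq hsum (mem_univ j), sub_div, div_self hne]
  refine ⟨hsuccess, fun R ε br₁ hR _ _ => ?_⟩
  rw [bribe_incentive_iff hj0 hR, hsuccess, sub_sub_cancel]

/-- Lemma on the smart-contract-based bribery attack in the unknown-miner
setting: the success probability equals `1 − β_j`, and the incentive condition
holds iff `br₁ ≥ β_j + ε`. -/
theorem stmt_11 {I : Type*} [Fintype I] [DecidableEq I] (α : I → ℝ)
    (hnn : ∀ i, 0 ≤ α i) (hsum : ∑ i, α i = 1)
    (j : I) (hj0 : 0 < α j) (hj1 : α j < 1) :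
    (∑ i ∈ Finset.univ.erase j, α i * (1 - α i)) / (1 - α j) =
      1 - (∑ i ∈ Finset.univ.erase j, (α i) ^ 2) / (1 - α j) ∧
    ∀ R ε br₁ : ℝ, 0 < R → 0 ≤ ε → 0 ≤ br₁ →
      (α j * ((∑ i ∈ Finset.univ.erase j, α i * (1 - α i)) / (1 - α j)) *
          (1 + br₁) * R +
        α j * (1 - (∑ i ∈ Finset.univ.erase j, α i * (1 - α i)) / (1 - α j)) *
          br₁ * R ≥ α j * R + ε * α j * R ↔
        br₁ ≥ (∑ i ∈ Finset.univ.erase j, (α i) ^ 2) / (1 - α j) + ε) :=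
  stmt_11_general α hsum j hj0 hj1
end

section
/- Let d ≥ 1 be an integer and let 0 < α < 1/2. For each natural number s, let G(d,s) denote the number of monotone lattice paths from (0,0) to (s, s+d) using unit right and unit up steps such that no point of the path other than the final endpoint lies on the line y = x − 2 or on the line y = x + d. Then Σ'_{s=0}^{∞} G(d,s)·(α(1−α))^s = (1−2α)/((1−α)^{d+2} − α^{d+2}). -/
/-!
Read a path as a walk on heights `2 + #up - #right`: it starts at `2`, is absorbed at `0` and at
`d + 2`, and the paths counted by `latticeG d s` are the first passages to `d + 2` with `s` right
steps. Let `A p` be the generating function, in `x` marking right steps, of first passages from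
height `p`. Splitting off the first step gives `A (p + 1) = A (p + 2) + x * A p`, with `A 0 = 0`
and `A (d + 2) = 1`. For `x = α (1 - α)` the characteristic roots are `1 - α` and `α`, so `A p` is
proportional to `(1 - α) ^ p - α ^ p`; the boundary value at `d + 2` fixes the constant, and the
series in question is `A 2`, with `(1 - α) ^ 2 - α ^ 2 = 1 - 2 α`.
-/

/-- Number of right steps among the first `k` steps of a step sequence
(`true` = unit right step, `false` = unit up step). -/
def rightsBefore {n : ℕ} (f : Fin n → Bool) (k : ℕ) : ℕ :=
  (Finset.univ.filter fun j : Fin n => j.val < k ∧ f j = true).card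

/-- Number of up steps among the first `k` steps of a step sequence. -/
def upsBefore {n : ℕ} (f : Fin n → Bool) (k : ℕ) : ℕ :=
  (Finset.univ.filter fun j : Fin n => j.val < k ∧ f j = false).card

/-- `G d s`: the number of monotone lattice paths from `(0,0)` to `(s, s+d)`
using unit right and unit up steps such that no point of the path other than
the final endpoint lies on the line `y = x − 2` or on the line `y = x + d`. -/
noncomputable def latticeG (d s : ℕ) : ℕ :=
  Nat.card {f : Fin (2 * s + d) → Bool //
    rightsBefore f (2 * s + d) = s ∧
    ∀ k < 2 * s + d,
      upsBefore f k ≠ rightsBefore f k + d ∧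
      rightsBefore f k ≠ upsBefore f k + 2}

@[simp]
lemma rightsBefore_zero {n : ℕ} (f : Fin n → Bool) : rightsBefore f 0 = 0 := by
  simp [rightsBefore]

@[simp]
lemma upsBefore_zero {n : ℕ} (f : Fin n → Bool) : upsBefore f 0 = 0 := by
  simp [upsBefore]

lemma rightsBefore_cons {n : ℕ} (b : Bool) (f : Fin n → Bool) (k : ℕ) :
    rightsBefore (Fin.cons b f) (k + 1) = (bif b then 1 else 0) + rightsBefore f k := by
  simp only [rightsBefore, Finset.card_filter]
  rw [Fin.sum_univ_succ]
  cases b <;> simp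

lemma upsBefore_cons {n : ℕ} (b : Bool) (f : Fin n → Bool) (k : ℕ) :
    upsBefore (Fin.cons b f) (k + 1) = (bif b then 0 else 1) + upsBefore f k := by
  simp only [upsBefore, Finset.card_filter]
  rw [Fin.sum_univ_succ]
  cases b <;> simp

lemma upsBefore_add_rightsBefore {n : ℕ} (f : Fin n → Bool) {k : ℕ} (hk : k ≤ n) :
    upsBefore f k + rightsBefore f k = k := by
  rw [upsBefore, rightsBefore, ← Finset.card_union_of_disjoint
    (Finset.disjoint_filter.2 fun _ _ h₁ h₂ => by simp_all), ← Finset.filter_or]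
  simp [← and_or_left, Fin.card_filter_val_lt, hk]

/-- The walk encoded by `f` starts at height `p`, an up step raises and a right step lowers the
height; it first reaches `d + 2` at time `n`, without visiting `0` before. -/
def IsFirstPassage (d p n : ℕ) (f : Fin n → Bool) : Prop :=
  upsBefore f n + p = rightsBefore f n + (d + 2) ∧
  ∀ k < n, upsBefore f k + p ≠ rightsBefore f k + (d + 2) ∧ rightsBefore f k ≠ upsBefore f k + p

noncomputable def firstPassageCount (d p n : ℕ) : ℕ :=
  Nat.card {f : Fin n → Bool // IsFirstPassage d p n f}

lemma isFirstPassage_cons {d q n : ℕ} (hq : q ≤ d) (b : Bool) (f : Fin n → Bool) :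
    IsFirstPassage d (q + 1) (n + 1) (Fin.cons b f) ↔
      IsFirstPassage d (bif b then q else q + 2) n f := by
  simp only [IsFirstPassage, Nat.forall_lt_succ_left, rightsBefore_cons, upsBefore_cons,
    rightsBefore_zero, upsBefore_zero]
  refine and_congr (by cases b <;> simp <;> omega) ?_
  rw [and_iff_right (by omega)]
  refine forall₂_congr fun k _ => ?_
  cases b <;> simp <;> omega

lemma firstPassageCount_succ_succ {d q n : ℕ} (hq : q ≤ d) :
    firstPassageCount d (q + 1) (n + 1) =
      firstPassageCount d q n + firstPassageCount d (q + 2) n := by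
  let e := ((Fin.consEquiv fun _ => Bool).subtypeEquiv fun _ => Iff.rfl).symm.trans
    (Equiv.subtypeProdEquivSigmaSubtype fun b f =>
      IsFirstPassage d (q + 1) (n + 1) (Fin.cons b f))
  rw [firstPassageCount, Nat.card_congr e, Nat.card_sigma, Fintype.sum_bool]
  simp only [isFirstPassage_cons hq]
  rfl

lemma firstPassageCount_zero_left (d n : ℕ) : firstPassageCount d 0 n = 0 := by
  rw [firstPassageCount, Nat.card_eq_zero]
  left
  refine ⟨fun ⟨f, hend, havoid⟩ => ?_⟩
  cases n with
  | zero => simp at hend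
  | succ n => simpa using havoid 0 n.succ_pos

lemma firstPassageCount_top (d n : ℕ) :
    firstPassageCount d (d + 2) n = if n = 0 then 1 else 0 := by
  split_ifs with hn
  · subst hn
    rw [firstPassageCount, Nat.card_eq_one_iff_unique]
    exact ⟨⟨fun f g => Subtype.ext (Subsingleton.elim _ _)⟩,
      ⟨⟨Fin.elim0, by simp [IsFirstPassage]⟩⟩⟩
  · rw [firstPassageCount, Nat.card_eq_zero]
    left
    exact ⟨fun ⟨f, _, havoid⟩ => by simpa using havoid 0 (Nat.pos_of_ne_zero hn)⟩

lemma firstPassageCount_eq_zero_of_lt {d p n : ℕ} (h : n + p < d + 2) :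
    firstPassageCount d p n = 0 := by
  rw [firstPassageCount, Nat.card_eq_zero]
  left
  refine ⟨fun ⟨f, hend, _⟩ => ?_⟩
  have := upsBefore_add_rightsBefore f le_rfl
  omega

lemma firstPassageCount_le (d p n : ℕ) : firstPassageCount d p n ≤ 2 ^ n := by
  simpa [firstPassageCount] using Finite.card_subtype_le (IsFirstPassage d p n)

lemma summable_firstPassageCount_mul_pow {x : ℝ} (hx0 : 0 ≤ x) (hx : 4 * x < 1) (d p c : ℕ) :
    Summable fun s : ℕ => (firstPassageCount d p (2 * s + c) : ℝ) * x ^ s := by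
  refine .of_nonneg_of_le (fun s => by positivity) (fun s => ?_)
    ((summable_geometric_of_lt_one (by positivity) hx).mul_left (2 ^ c))
  calc (firstPassageCount d p (2 * s + c) : ℝ) * x ^ s ≤ 2 ^ (2 * s + c) * x ^ s := by
        gcongr
        exact_mod_cast firstPassageCount_le d p _
    _ = 2 ^ c * (4 * x) ^ s := by rw [pow_add, pow_mul, mul_pow]; norm_num; ring

/-- A walk from height `p` to height `d + 2` takes `d + 2 - p + 2 s` steps, `s` of them right
steps; the variable `x` marks the right steps. -/
noncomputable def firstPassageGF (x : ℝ) (d p : ℕ) : ℝ :=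
  ∑' s : ℕ, (firstPassageCount d p (2 * s + (d + 2 - p)) : ℝ) * x ^ s

lemma firstPassageGF_zero (x : ℝ) (d : ℕ) : firstPassageGF x d 0 = 0 := by
  simp [firstPassageGF, firstPassageCount_zero_left]

lemma firstPassageGF_top (x : ℝ) (d : ℕ) : firstPassageGF x d (d + 2) = 1 := by
  rw [firstPassageGF, tsum_eq_single 0 fun s hs => by simp [firstPassageCount_top, hs]]
  simp [firstPassageCount_top]

lemma firstPassageGF_succ {x : ℝ} (hx0 : 0 ≤ x) (hx : 4 * x < 1) {d q : ℕ} (hq : q ≤ d) :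
    firstPassageGF x d (q + 1) = firstPassageGF x d (q + 2) + x * firstPassageGF x d q := by
  have hsum := summable_firstPassageCount_mul_pow hx0 hx d
  have hshift : ∑' s : ℕ, (firstPassageCount d q (2 * s + (d - q)) : ℝ) * x ^ s =
      x * firstPassageGF x d q := by
    rw [(hsum q _).tsum_eq_zero_add, firstPassageCount_eq_zero_of_lt (by omega),
      firstPassageGF, ← tsum_mul_left]
    simp only [Nat.cast_zero, zero_mul, zero_add]
    refine tsum_congr fun s => ?_
    rw [show 2 * (s + 1) + (d - q) = 2 * s + (d + 2 - q) by omega]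
    ring
  calc firstPassageGF x d (q + 1)
      = ∑' s : ℕ, ((firstPassageCount d (q + 2) (2 * s + (d + 2 - (q + 2))) : ℝ) * x ^ s +
          (firstPassageCount d q (2 * s + (d - q)) : ℝ) * x ^ s) := by
        refine tsum_congr fun s => ?_
        rw [show 2 * s + (d + 2 - (q + 1)) = 2 * s + (d - q) + 1 by omega,
          firstPassageCount_succ_succ hq, show d + 2 - (q + 2) = d - q by omega]
        push_cast
        ring
    _ = firstPassageGF x d (q + 2) + x * firstPassageGF x d q := by
        rw [(hsum _ _).tsum_add (hsum _ _), hshift]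
        rfl

lemma eq_of_recurrence {M : Type*} (F : M → M → M) {u v : ℕ → M} {m : ℕ}
    (h0 : u 0 = v 0) (h1 : u 1 = v 1)
    (hu : ∀ q, q + 2 ≤ m → u (q + 2) = F (u (q + 1)) (u q))
    (hv : ∀ q, q + 2 ≤ m → v (q + 2) = F (v (q + 1)) (v q)) :
    ∀ p ≤ m, u p = v p
  | 0, _ => h0
  | 1, _ => h1
  | q + 2, hq => by
    rw [hu q hq, hv q hq, eq_of_recurrence F h0 h1 hu hv (q + 1) (by omega),
      eq_of_recurrence F h0 h1 hu hv q (by omega)]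

lemma firstPassageGF_eq {α : ℝ} (hα0 : 0 < α) (hα1 : α < 1 / 2) {d p : ℕ} (hp : p ≤ d + 2) :
    firstPassageGF (α * (1 - α)) d p =
      ((1 - α) ^ p - α ^ p) / ((1 - α) ^ (d + 2) - α ^ (d + 2)) := by
  have hx0 : 0 ≤ α * (1 - α) := by nlinarith
  have hx : 4 * (α * (1 - α)) < 1 := by nlinarith
  have hrec (q : ℕ) (hq : q + 2 ≤ d + 2) := firstPassageGF_succ hx0 hx (d := d) (q := q) (by omega)
  have hlin : ∀ n ≤ d + 2, (1 - 2 * α) * firstPassageGF (α * (1 - α)) d n =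
      firstPassageGF (α * (1 - α)) d 1 * ((1 - α) ^ n - α ^ n) :=
    eq_of_recurrence (fun a b => a - α * (1 - α) * b)
      (by simp [firstPassageGF_zero]) (by ring)
      (fun q hq => by linear_combination (2 * α - 1) * hrec q hq)
      (fun q _ => by ring)
  have htop := hlin (d + 2) le_rfl
  rw [firstPassageGF_top] at htop
  have hD : α ^ (d + 2) < (1 - α) ^ (d + 2) := by gcongr; linarith
  rw [eq_div_iff (sub_pos.2 hD).ne']
  refine mul_left_cancel₀ (by linarith : (1 - 2 * α) ≠ 0) ?_
  linear_combination ((1 - α) ^ (d + 2) - α ^ (d + 2)) * hlin p hp - ((1 - α) ^ p - α ^ p) * htop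

lemma latticeG_eq_firstPassageCount (d s : ℕ) :
    latticeG d s = firstPassageCount d 2 (2 * s + d) := by
  refine Nat.card_congr (Equiv.subtypeEquivRight fun f => ?_)
  have := upsBefore_add_rightsBefore f le_rfl
  refine and_congr (by omega) (forall₂_congr fun k _ => ?_)
  omega

theorem stmt_16_general (d : ℕ) (α : ℝ) (hα0 : 0 < α) (hα1 : α < 1 / 2) :
    ∑' s : ℕ, (latticeG d s : ℝ) * (α * (1 - α)) ^ s =
      (1 - 2 * α) / ((1 - α) ^ (d + 2) - α ^ (d + 2)) := by
  calc ∑' s : ℕ, (latticeG d s : ℝ) * (α * (1 - α)) ^ s = firstPassageGF (α * (1 - α)) d 2 := by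
        simp [firstPassageGF, latticeG_eq_firstPassageCount]
    _ = _ := by rw [firstPassageGF_eq hα0 hα1 (by omega)]; ring

/-- Lemma 4, first identity. -/
theorem stmt_16 (d : ℕ) (hd : 1 ≤ d) (α : ℝ) (hα0 : 0 < α) (hα1 : α < 1 / 2) :
    ∑' s : ℕ, (latticeG d s : ℝ) * (α * (1 - α)) ^ s =
      (1 - 2 * α) / ((1 - α) ^ (d + 2) - α ^ (d + 2)) :=
  stmt_16_general d α hα0 hα1
end

section
/- Let b : Fin N → ℝ satisfy 0 ≤ bᵢ < 1 for all i, let α ≥ 0, and set b_tot = Σᵢ bᵢ and β = Σᵢ bᵢ/(1−bᵢ). Define P₀ = (1 − b_tot + α·β)/(1+β), P₁(i) = bᵢ/((1−bᵢ)(1+β)), and P₂(i) = bᵢ·(1−α−bᵢ)/((1−bᵢ)(1+β)). Then: (i) P₀ + Σᵢ (P₁(i) + P₂(i)) = 1; (ii) P₂(i) = (1−α−bᵢ)·P₁(i) for every i; and (iii) P₁(i) = bᵢ·(P₀ + P₁(i) + Σⱼ P₂(j)) for every i. -/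
/-!
With `wᵢ = bᵢ / (1 - bᵢ)` and `β = ∑ wᵢ` one has `P₁(i) = wᵢ / (1 + β)` and, since
`(1 - bᵢ) wᵢ = bᵢ`, `P₂(i) = (bᵢ - α wᵢ) / (1 + β)`. Summing, the terms in `α` and `b_tot`
cancel in `P₀ + ∑ P₂ = 1 / (1 + β)`; adding `∑ P₁ = β / (1 + β)` gives the normalization, and
`bᵢ (1 + wᵢ) = wᵢ` gives the balance equation at `S₁(i)`.
-/

open Finset

section

variable {ι K : Type*} [Fintype ι] [Field K]

lemma mul_one_sub_sub_div_one_sub {b : K} (hb : b ≠ 1) (α : K) :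
    b * (1 - α - b) / (1 - b) = b - α * (b / (1 - b)) := by
  have : 1 - b ≠ 0 := sub_ne_zero.2 hb.symm
  field_simp
  ring

lemma sum_div_one_sub_mul (b : ι → K) (s : K) :
    ∑ i, b i / ((1 - b i) * s) = (∑ i, b i / (1 - b i)) / s := by
  simp only [← div_div, sum_div]

lemma sum_mul_one_sub_sub_div_one_sub_mul (b : ι → K) (hb : ∀ i, b i ≠ 1) (α s : K) :
    ∑ i, b i * (1 - α - b i) / ((1 - b i) * s) =
      (∑ i, b i - α * ∑ i, b i / (1 - b i)) / s := by
  simp only [← div_div, ← sum_div, mul_one_sub_sub_div_one_sub (hb _), sum_sub_distrib, mul_sum]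

end

lemma one_add_sum_div_one_sub_pos {ι : Type*} [Fintype ι] (b : ι → ℝ)
    (hb : ∀ i, 0 ≤ b i ∧ b i < 1) : 0 < 1 + ∑ i, b i / (1 - b i) := by
  have : 0 ≤ ∑ i, b i / (1 - b i) :=
    sum_nonneg fun i _ ↦ div_nonneg (hb i).1 (sub_nonneg.2 (hb i).2.le)
  linarith

theorem stmt_19_general {N : ℕ} (b : Fin N → ℝ) (α : ℝ)
    (hb : ∀ i, 0 ≤ b i ∧ b i < 1)
    (btot β : ℝ) (hbtot : btot = ∑ i, b i) (hβ : β = ∑ i, b i / (1 - b i))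
    (P₀ : ℝ) (P₁ P₂ : Fin N → ℝ)
    (hP₀ : P₀ = (1 - btot + α * β) / (1 + β))
    (hP₁ : ∀ i, P₁ i = b i / ((1 - b i) * (1 + β)))
    (hP₂ : ∀ i, P₂ i = b i * (1 - α - b i) / ((1 - b i) * (1 + β))) :
    P₀ + ∑ i, (P₁ i + P₂ i) = 1 ∧
    (∀ i, P₂ i = (1 - α - b i) * P₁ i) ∧
    (∀ i, P₁ i = b i * (P₀ + P₁ i + ∑ j, P₂ j)) := by
  have hb₁ : ∀ i, b i ≠ 1 := fun i ↦ (hb i).2.ne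
  have hs : 1 + β ≠ 0 := (hβ ▸ one_add_sum_div_one_sub_pos b hb).ne'
  have hsum₁ : ∑ i, P₁ i = β / (1 + β) := by
    simp only [hP₁, sum_div_one_sub_mul, hβ]
  have hsum₂ : ∑ i, P₂ i = (btot - α * β) / (1 + β) := by
    simp only [hP₂, sum_mul_one_sub_sub_div_one_sub_mul b hb₁, hbtot, hβ]
  have hP₀_add_sum₂ : P₀ + ∑ i, P₂ i = 1 / (1 + β) := by
    rw [hsum₂, hP₀, ← add_div]
    ring_nf
  refine ⟨?_, fun i ↦ by rw [hP₁, hP₂]; ring, fun i ↦ ?_⟩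
  · rw [sum_add_distrib, hsum₁, add_left_comm, hP₀_add_sum₂, ← add_div, add_comm, div_self hs]
  · have : 1 - b i ≠ 0 := sub_ne_zero.2 (hb₁ i).symm
    rw [add_right_comm, hP₀_add_sum₂, hP₁]
    field_simp
    ring

/-- Stationary-distribution computation in the Markov-chain analysis of the
bribery attack (normalization and balance equations). -/
theorem stmt_19 {N : ℕ} (b : Fin N → ℝ) (α : ℝ)
    (hb : ∀ i, 0 ≤ b i ∧ b i < 1) (hα : 0 ≤ α)
    (btot β : ℝ) (hbtot : btot = ∑ i, b i) (hβ : β = ∑ i, b i / (1 - b i))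
    (P₀ : ℝ) (P₁ P₂ : Fin N → ℝ)
    (hP₀ : P₀ = (1 - btot + α * β) / (1 + β))
    (hP₁ : ∀ i, P₁ i = b i / ((1 - b i) * (1 + β)))
    (hP₂ : ∀ i, P₂ i = b i * (1 - α - b i) / ((1 - b i) * (1 + β))) :
    P₀ + ∑ i, (P₁ i + P₂ i) = 1 ∧
    (∀ i, P₂ i = (1 - α - b i) * P₁ i) ∧
    (∀ i, P₁ i = b i * (P₀ + P₁ i + ∑ j, P₂ j)) :=
  stmt_19_general b α hb btot β hbtot hβ P₀ P₁ P₂ hP₀ hP₁ hP₂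
end
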